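/- arXiv:math/0403011 — 2 statements merged into one kernel-verified Lean document; each statement's English description precedes it below -/
import Mathlib

section
/- For every integer m ≥ 2 and all α, β ∈ ℂ, the multiplication identity Σ_{k=0}^{m−1} h_0(α + ω^k · β) = m · h_0(α) · h_0(β) holds, where ω = exp(2πi/m). -/
open Complex Finset

/-- `ω = exp(2πi/m)`, the primitive `m`-th root of unity. -/
noncomputable def om (m : ℕ) : ℂ := Complex.exp (2 * Real.pi * Complex.I / m)

/-- The `m`-th order hyperbolic function
`h_k(z) = (1/m) · Σ_{s=0}^{m−1} ω^{−k·s} · exp(ω^s · z)`. -/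
noncomputable def hfun (m k : ℕ) (z : ℂ) : ℂ :=
  (1 / (m : ℂ)) * ∑ s ∈ Finset.range m, (om m) ^ (-((k * s : ℕ) : ℤ)) * Complex.exp ((om m) ^ s * z)

/-!
Expanding `h_0(α + ω^k β)` and using `exp(ω^s (α + ω^k β)) = exp(ω^s α) exp(ω^(s+k) β)`,
the double sum over `k` and `s` factors, because for fixed `s` the exponents `ω^(s+k)`, `k < m`,
are the `ω^t`, `t < m`, cyclically shifted, since `ω^m = 1`.
-/

theorem Function.Periodic.sum_range_add {M : Type*} [AddCommMonoid M] {f : ℕ → M} {n : ℕ}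
    (hf : Function.Periodic f n) (s : ℕ) :
    ∑ k ∈ range n, f (s + k) = ∑ k ∈ range n, f k := by
  induction s with
  | zero => simp only [zero_add]
  | succ s ih =>
    rw [← ih]
    cases n with
    | zero => rfl
    | succ n =>
      rw [sum_range_succ, sum_range_succ' (fun k => f (s + k)), add_zero, add_right_comm s 1 n,
        add_assoc s n 1, hf]
      simp only [add_right_comm s 1, add_assoc]

theorem om_pow_self (m : ℕ) : om m ^ m = 1 := by
  rcases eq_or_ne m 0 with rfl | hm
  · exact pow_zero _
  · exact (isPrimitiveRoot_exp m hm).pow_eq_one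

theorem hfun_zero (m : ℕ) (z : ℂ) :
    hfun m 0 z = (1 / (m : ℂ)) * ∑ s ∈ range m, exp (om m ^ s * z) := by
  simp only [hfun, zero_mul, Nat.cast_zero, neg_zero, zpow_zero, one_mul]

theorem sum_sum_exp_root_of_unity_mul {ζ : ℂ} {m : ℕ} (hζ : ζ ^ m = 1) (α β : ℂ) :
    ∑ k ∈ range m, ∑ s ∈ range m, exp (ζ ^ s * (α + ζ ^ k * β)) =
      (∑ s ∈ range m, exp (ζ ^ s * α)) * ∑ t ∈ range m, exp (ζ ^ t * β) := by
  have hper : Function.Periodic (fun t => exp (ζ ^ t * β)) m := fun t => by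
    simp only [pow_add, hζ, mul_one]
  rw [sum_comm, sum_mul]
  refine sum_congr rfl fun s _ => ?_
  simp only [mul_add, exp_add, ← mul_sum, ← mul_assoc, ← pow_add]
  rw [hper.sum_range_add s]

theorem hfun_mult_identity_general (m : ℕ) (α β : ℂ) :
    ∑ k ∈ Finset.range m, hfun m 0 (α + (om m) ^ k * β) = (m : ℂ) * hfun m 0 α * hfun m 0 β := by
  simp only [hfun_zero, ← mul_sum, sum_sum_exp_root_of_unity_mul (om_pow_self m)]
  -- `m⁻¹ = m⁻¹ * m * m⁻¹` holds also for `m = 0`, where `1 / m = 0`.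
  nth_rw 1 [one_div, ← mul_inv_mul_cancel (m : ℂ)⁻¹, inv_inv]
  ring

/-- Multiplication identity: `Σ_{k=0}^{m−1} h_0(α + ω^k·β) = m · h_0(α) · h_0(β)`. -/
theorem hfun_mult_identity (m : ℕ) (hm : 2 ≤ m) (α β : ℂ) :
    ∑ k ∈ Finset.range m, hfun m 0 (α + (om m) ^ k * β) = (m : ℂ) * hfun m 0 α * hfun m 0 β :=
  hfun_mult_identity_general m α β
end

section
/- Fix an integer m ≥ 2. For all α, β ∈ ℂ, the circulant matrices H(α) with (i,k) entry h_{(k−i) mod m}(α) satisfy the de Moivre group law H(α) · H(β) = H(α + β). -/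
open Complex Finset Matrix

/-- The circulant matrix `H(α)` with `(i,k)` entry `h_{(k−i) mod m}(α)`. -/
noncomputable def Hmat (m : ℕ) (α : ℂ) : Matrix (Fin m) (Fin m) ℂ :=
  Matrix.of fun i k => hfun m (((k : ℕ) + m - (i : ℕ)) % m) α


lemma om_ne_zero (m : ℕ) : om m ≠ 0 := Complex.exp_ne_zero _

lemma om_prim (m : ℕ) (hm : m ≠ 0) : IsPrimitiveRoot (om m) m :=
  Complex.isPrimitiveRoot_exp m hm

lemma om_pow_m (m : ℕ) (hm : m ≠ 0) : (om m) ^ m = 1 := (om_prim m hm).pow_eq_one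

lemma om_zpow_congr (m : ℕ) (hm : m ≠ 0) {a b : ℤ} (h : (m:ℤ) ∣ a - b) :
    (om m) ^ a = (om m) ^ b := by
  obtain ⟨c, hc⟩ := h
  have ha : a = b + m * c := by linarith
  rw [ha, zpow_add₀ (om_ne_zero m), _root_.zpow_mul, zpow_natCast, om_pow_m m hm, _root_.one_zpow, mul_one]

lemma sum_om_zpow (m : ℕ) (hm : m ≠ 0) (d : ℤ) :
    ∑ j ∈ Finset.range m, ((om m) ^ d) ^ j = if (m:ℤ) ∣ d then (m:ℂ) else 0 := by
  by_cases h : (m:ℤ) ∣ d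
  · have h1 : (om m) ^ d = 1 := by
      have := om_zpow_congr m hm (a := d) (b := 0) (by simpa using h)
      simpa using this
    simp [h1, h]
  · have hx1 : (om m) ^ d ≠ 1 := fun hx =>
      h (((om_prim m hm).zpow_eq_one_iff_dvd d).mp hx)
    rw [geom_sum_eq hx1]
    have hxm : ((om m) ^ d) ^ m = 1 := by
      rw [← zpow_natCast ((om m) ^ d), ← _root_.zpow_mul]
      have := om_zpow_congr m hm (a := d * m) (b := 0) (by simp [mul_comm])
      simpa using this
    simp [hxm, h]

lemma hfun_mod (m : ℕ) (hm : m ≠ 0) (a : ℕ) (z : ℂ) :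
    hfun m (a % m) z = (1 / (m : ℂ)) * ∑ s ∈ Finset.range m,
      (om m) ^ (-(a : ℤ) * s) * Complex.exp ((om m) ^ s * z) := by
  unfold hfun
  congr 1
  refine Finset.sum_congr rfl fun s _ => ?_
  congr 1
  apply om_zpow_congr m hm
  obtain ⟨q, r, hr, rfl⟩ : ∃ q r, r = (m * q + r) % m ∧ a = m * q + r :=
    ⟨a / m, a % m, by rw [Nat.div_add_mod], (Nat.div_add_mod a m).symm⟩
  refine ⟨q * s, ?_⟩
  rw [← hr]
  push_cast
  ring

/-- De Moivre group law: `H(α) · H(β) = H(α + β)`. -/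
theorem Hmat_group_law (m : ℕ) (hm : 2 ≤ m) (α β : ℂ) :
    Hmat m α * Hmat m β = Hmat m (α + β) := by
  have hm0 : m ≠ 0 := by omega
  have hmC : (m : ℂ) ≠ 0 := Nat.cast_ne_zero.mpr hm0
  have hω := om_ne_zero m
  ext i k
  rw [Matrix.mul_apply]
  simp only [Hmat, Matrix.of_apply]
  -- rewrite both sides with hfun_mod
  rw [hfun_mod m hm0 ((k : ℕ) + m - (i : ℕ)) (α + β)]
  have step1 : ∀ j : Fin m,
      hfun m (((j:ℕ) + m - (i:ℕ)) % m) α * hfun m (((k:ℕ) + m - (j:ℕ)) % m) β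
      = (1/(m:ℂ)) * (1/(m:ℂ)) * ∑ s ∈ range m, ∑ t ∈ range m,
          ((om m) ^ ((t:ℤ) - (s:ℤ))) ^ (j:ℕ) *
          ((om m) ^ (-((m:ℤ) - (i:ℤ)) * s + (-((k:ℤ) + (m:ℤ)) * t)) *
           (Complex.exp ((om m)^s * α) * Complex.exp ((om m)^t * β))) := by
    intro j
    rw [hfun_mod m hm0 _ α, hfun_mod m hm0 _ β, mul_mul_mul_comm, Finset.sum_mul_sum]
    congr 1
    refine Finset.sum_congr rfl fun s _ => Finset.sum_congr rfl fun t _ => ?_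
    have hcast1 : (((j:ℕ) + m - (i:ℕ) : ℕ) : ℤ) = (j:ℤ) + m - i := by
      have : (i:ℕ) ≤ (j:ℕ) + m := le_add_left (le_of_lt i.isLt)
      omega
    have hcast2 : (((k:ℕ) + m - (j:ℕ) : ℕ) : ℤ) = (k:ℤ) + m - j := by
      have : (j:ℕ) ≤ (k:ℕ) + m := le_add_left (le_of_lt j.isLt)
      omega
    rw [mul_mul_mul_comm, hcast1, hcast2, ← zpow_natCast ((om m) ^ ((t:ℤ) - s)),
        ← _root_.zpow_mul, ← zpow_add₀ hω]
    rw [show (-(((j:ℕ):ℤ)+m-((i:ℕ):ℤ))*(s:ℤ) + -(((k:ℕ):ℤ)+m-((j:ℕ):ℤ))*(t:ℤ))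
        = ((t:ℤ)-(s:ℤ))*((j:ℕ):ℤ) + (-((m:ℤ)-((i:ℕ):ℤ))*(s:ℤ) + -(((k:ℕ):ℤ)+(m:ℤ))*(t:ℤ)) from by ring]
    rw [zpow_add₀ hω, mul_assoc]
  rw [Finset.sum_congr rfl fun j _ => step1 j, ← Finset.mul_sum,
      Fin.sum_univ_eq_sum_range (fun j => ∑ s ∈ range m, ∑ t ∈ range m,
        ((om m) ^ ((t:ℤ) - (s:ℤ))) ^ j *
          ((om m) ^ (-((m:ℤ) - ((i:ℕ):ℤ)) * s + (-(((k:ℕ):ℤ) + (m:ℤ)) * t)) *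
           (Complex.exp ((om m)^s * α) * Complex.exp ((om m)^t * β)))) m]
  have key : ∑ j ∈ Finset.range m, ∑ s ∈ range m, ∑ t ∈ range m,
      ((om m) ^ ((t:ℤ) - (s:ℤ))) ^ j *
        ((om m) ^ (-((m:ℤ) - ((i:ℕ):ℤ)) * s + (-(((k:ℕ):ℤ) + (m:ℤ)) * t)) *
         (Complex.exp ((om m)^s * α) * Complex.exp ((om m)^t * β)))
      = ∑ s ∈ range m, (m:ℂ) *
          ((om m) ^ (-((m:ℤ) - ((i:ℕ):ℤ)) * s + (-(((k:ℕ):ℤ) + (m:ℤ)) * s)) *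
           (Complex.exp ((om m)^s * α) * Complex.exp ((om m)^s * β))) := by
    rw [Finset.sum_comm]
    refine Finset.sum_congr rfl fun s hs => ?_
    rw [Finset.sum_comm]
    have hrw : ∀ t ∈ range m, (∑ j ∈ range m,
        ((om m) ^ ((t:ℤ) - (s:ℤ))) ^ j *
          ((om m) ^ (-((m:ℤ) - ((i:ℕ):ℤ)) * s + (-(((k:ℕ):ℤ) + (m:ℤ)) * t)) *
           (Complex.exp ((om m)^s * α) * Complex.exp ((om m)^t * β))))
        = (if (m:ℤ) ∣ ((t:ℤ) - (s:ℤ)) then (m:ℂ) else 0) *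
          ((om m) ^ (-((m:ℤ) - ((i:ℕ):ℤ)) * s + (-(((k:ℕ):ℤ) + (m:ℤ)) * t)) *
           (Complex.exp ((om m)^s * α) * Complex.exp ((om m)^t * β))) := fun t _ => by
      rw [← Finset.sum_mul, sum_om_zpow m hm0]
    rw [Finset.sum_congr rfl hrw]
    rw [Finset.sum_eq_single s]
    · simp
    · intro t ht hts
      have hnd : ¬ (m:ℤ) ∣ ((t:ℤ) - (s:ℤ)) := by
        intro hd
        have h0 : (t:ℤ) - (s:ℤ) = 0 := by
          refine Int.eq_zero_of_dvd_of_natAbs_lt_natAbs hd ?_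
          have ht' : t < m := Finset.mem_range.mp ht
          have hs' : s < m := Finset.mem_range.mp hs
          simp only [Int.natAbs_natCast]
          omega
        exact hts (by omega)
      simp [hnd]
    · intro h; exact absurd hs h
  rw [key, Finset.mul_sum, Finset.mul_sum]
  refine Finset.sum_congr rfl fun s hs => ?_
  have hexp : (om m) ^ (-((m:ℤ) - ((i:ℕ):ℤ)) * s + (-(((k:ℕ):ℤ) + (m:ℤ)) * s))
      = (om m) ^ (-((((k:ℕ) + m - (i:ℕ) : ℕ)):ℤ) * s) := by
    apply om_zpow_congr m hm0
    have hcast : ((((k:ℕ) + m - (i:ℕ) : ℕ)):ℤ) = ((k:ℕ):ℤ) + m - ((i:ℕ):ℤ) := by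
      have : (i:ℕ) ≤ (k:ℕ) + m := le_add_left (le_of_lt i.isLt)
      omega
    rw [hcast]
    exact ⟨-s, by ring⟩
  rw [hexp, ← Complex.exp_add, ← mul_add]
  have hgen : ∀ X : ℂ, (1/(m:ℂ)) * (1/m) * ((m:ℂ) * X) = (1/m) * X := fun X => by
    field_simp
  exact hgen _
end
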